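/- Let y, y′, p, x be points of the hyperbolic plane ℍ such that dist y p + dist p y′ = dist y y′ (p lies on the geodesic segment from y to y′), and set s = dist y p and t = dist p y′. Then sinh t · cosh(dist x y) + sinh s · cosh(dist x y′) = sinh(s + t) · cosh(dist x p). -/

import Mathlib

/-!
Send `ℍ` to the upper sheet of the hyperboloid `⟪u, u⟫ = 1` in Minkowski space `ℝ^{1,2}`, where
`cosh (dist z w) = ⟪z, w⟫`. If `p` lies on the segment `[y, y']`, with `s = dist y p` and
`t = dist p y'`, these Gram values make `v = sinh t • y + sinh s • y' - sinh (s + t) • p`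
isotropic and orthogonal to the timelike vector `p`, so `v = 0`. Pairing `v = 0` with `x` gives the
identity.
-/

open Real UpperHalfPlane

namespace LinearMap.BilinForm.IsSymm

variable {M : Type*} [AddCommGroup M] [Module ℝ M] {B : LinearMap.BilinForm ℝ M}

theorem apply_sinh_combination_eq_zero (hB : B.IsSymm) {a b c v : M} {s t : ℝ}
    (ha : B a a = 1) (hb : B b b = 1) (hc : B c c = 1)
    (hac : B a c = cosh s) (hcb : B c b = cosh t) (hab : B a b = cosh (s + t))
    (hv : v = sinh t • a + sinh s • b - sinh (s + t) • c) :
    B v v = 0 ∧ B c v = 0 := by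
  have hca : B c a = cosh s := hB.eq a c ▸ hac
  have hbc : B b c = cosh t := hB.eq c b ▸ hcb
  have hba : B b a = cosh (s + t) := hB.eq a b ▸ hab
  subst hv
  simp only [map_add, map_sub, map_smul, LinearMap.add_apply, LinearMap.sub_apply,
    LinearMap.smul_apply, smul_eq_mul, ha, hb, hc, hac, hcb, hab, hca, hbc, hba]
  rw [sinh_add, cosh_add]
  constructor
  · linear_combination (-(sinh t ^ 2)) * cosh_sq_sub_sinh_sq s - sinh s ^ 2 * cosh_sq_sub_sinh_sq t
  · ring

end LinearMap.BilinForm.IsSymm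

def minkowski : LinearMap.BilinForm ℝ (Fin 3 → ℝ) :=
  LinearMap.mk₂ ℝ (fun u v => u 0 * v 0 - u 1 * v 1 - u 2 * v 2)
    (fun _ _ _ => by simp only [Pi.add_apply]; ring)
    (fun _ _ _ => by simp only [Pi.smul_apply, smul_eq_mul]; ring)
    (fun _ _ _ => by simp only [Pi.add_apply]; ring)
    (fun _ _ _ => by simp only [Pi.smul_apply, smul_eq_mul]; ring)

theorem minkowski_apply (u v : Fin 3 → ℝ) :
    minkowski u v = u 0 * v 0 - u 1 * v 1 - u 2 * v 2 := rfl

theorem minkowski_isSymm : minkowski.IsSymm :=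
  ⟨fun u v => by simp only [minkowski_apply]; ring⟩

theorem eq_zero_of_minkowski_self_eq_zero_of_minkowski_eq_zero {u v : Fin 3 → ℝ}
    (hu : 0 < minkowski u u) (hv : minkowski v v = 0) (huv : minkowski u v = 0) : v = 0 := by
  -- Lagrange identity: the form is negative definite on the orthogonal complement of `u`
  have key : v 0 ^ 2 * minkowski u u + (v 1 * u 2 - v 2 * u 1) ^ 2 = 0 := by
    rw [minkowski_apply] at hv huv ⊢
    linear_combination (v 0 * u 0 + v 1 * u 1 + v 2 * u 2) * huv - (u 1 ^ 2 + u 2 ^ 2) * hv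
  have hv0 : v 0 = 0 := by
    have : v 0 ^ 2 * minkowski u u = 0 := by
      linarith [sq_nonneg (v 1 * u 2 - v 2 * u 1), mul_nonneg (sq_nonneg (v 0)) hu.le]
    simpa [hu.ne'] using this
  rw [minkowski_apply, hv0] at hv
  have hv1 : v 1 = 0 := by nlinarith [sq_nonneg (v 1), sq_nonneg (v 2)]
  have hv2 : v 2 = 0 := by nlinarith [sq_nonneg (v 1), sq_nonneg (v 2)]
  ext i
  fin_cases i <;> assumption

noncomputable def toHyperboloid (z : ℍ) : Fin 3 → ℝ :=
  ![(z.re ^ 2 + z.im ^ 2 + 1) / (2 * z.im), z.re / z.im, (z.re ^ 2 + z.im ^ 2 - 1) / (2 * z.im)]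

theorem cosh_dist_eq_minkowski (z w : ℍ) :
    cosh (dist z w) = minkowski (toHyperboloid z) (toHyperboloid w) := by
  have hz := z.im_pos
  have hw := w.im_pos
  rw [cosh_dist, Complex.dist_eq_re_im, sq_sqrt (by positivity), minkowski_apply]
  simp only [toHyperboloid, Matrix.cons_val, coe_re, coe_im]
  field_simp
  ring

theorem minkowski_toHyperboloid_self (z : ℍ) :
    minkowski (toHyperboloid z) (toHyperboloid z) = 1 := by
  simpa using (cosh_dist_eq_minkowski z z).symm

theorem sinh_smul_toHyperboloid_add_of_dist_add_dist_eq {y y' p : ℍ}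
    (hp : dist y p + dist p y' = dist y y') :
    sinh (dist p y') • toHyperboloid y + sinh (dist y p) • toHyperboloid y' =
      sinh (dist y p + dist p y') • toHyperboloid p := by
  obtain ⟨hnull, horth⟩ := minkowski_isSymm.apply_sinh_combination_eq_zero
    (minkowski_toHyperboloid_self y) (minkowski_toHyperboloid_self y')
    (minkowski_toHyperboloid_self p) (cosh_dist_eq_minkowski y p).symm
    (cosh_dist_eq_minkowski p y').symm (hp ▸ (cosh_dist_eq_minkowski y y').symm) rfl
  have htimelike : 0 < minkowski (toHyperboloid p) (toHyperboloid p) := by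
    rw [minkowski_toHyperboloid_self]; exact one_pos
  exact sub_eq_zero.mp
    (eq_zero_of_minkowski_self_eq_zero_of_minkowski_eq_zero htimelike hnull horth)

/-- In the hyperbolic plane, if `p` lies on the geodesic segment from `y` to `y'`,
with `s = dist y p` and `t = dist p y'`, then
`sinh t * cosh (dist x y) + sinh s * cosh (dist x y') = sinh (s + t) * cosh (dist x p)`. -/
theorem hyperbolic_segment_cosh_identity
    (y y' p x : UpperHalfPlane)
    (hp : dist y p + dist p y' = dist y y') :
    Real.sinh (dist p y') * Real.cosh (dist x y) +
      Real.sinh (dist y p) * Real.cosh (dist x y') =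
        Real.sinh (dist y p + dist p y') * Real.cosh (dist x p) := by
  have h := congrArg (minkowski (toHyperboloid x))
    (sinh_smul_toHyperboloid_add_of_dist_add_dist_eq hp)
  simpa only [map_add, map_smul, smul_eq_mul, ← cosh_dist_eq_minkowski] using h
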